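/- (Lower semicontinuity from a measure-theoretic De Giorgi property.) Let Ω ⊆ ℝⁿ be open, let u : ℝⁿ → ℝ be measurable, locally integrable on Ω, and locally essentially bounded below on Ω, and fix c ∈ (0,1). Assume that for every a ∈ (0,1), every M > 0 and every μ ∈ ℝ there exists τ ∈ (0,1) such that for every y ∈ Ω and every ρ ∈ (0,1] with B_ρ(y) ⊆ Ω and μ ≤ ess inf_{B_ρ(y)} u: if |{x ∈ B_ρ(y) : u(x) ≤ μ + M}| ≤ τ |B_ρ(y)|, then u ≥ μ + aM almost everywhere in B_{cρ}(y). Then for every x ∈ Ω such that lim_{r→0} ⨍_{B_r(x)} |u(y) − u(x)| dy = 0 (a Lebesgue point of u), one has u(x) = lim_{r→0} ess inf_{B_r(x)} u. In particular, the function u_*(x) = lim_{r→0} ess inf_{B_r(x)} u is a lower semicontinuous representative of u in Ω. -/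

import Mathlib

/-!
Averaging `|u - u x|` over `B_r(x)` bounds `ess inf_{B_r(x)} u` by `u x` plus a quantity that
vanishes at a Lebesgue point. Conversely, if `L = liminf_{r → 0} ess inf_{B_r(x)} u` were below
`u x`, Chebyshev's inequality at the Lebesgue point would make the sublevel sets of `u` slightly
above `L` a `τ`-small fraction of all small balls, and property (D) would then lift the essential
infimum above `L` on all smaller balls.
-/

open MeasureTheory Metric Set Filter

noncomputable section

/-- Euclidean space `ℝⁿ`. -/
abbrev Rn (n : ℕ) := EuclideanSpace ℝ (Fin n)

open scoped Topology ENNReal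

section MeasureSpace

variable {α : Type*} [MeasurableSpace α] {μ : Measure α} {u : α → ℝ}

theorem isCoboundedUnder_ge_ae (hμ : μ ≠ 0) :
    IsCoboundedUnder (· ≥ ·) (ae μ) u := by
  have : (ae μ).NeBot := ae_neBot.2 hμ
  obtain ⟨n, hn⟩ : ∃ n : ℕ, ∃ᶠ y in ae μ, u y ≤ n := by
    by_contra! h
    obtain ⟨y, hy⟩ := (ae_all_iff.2 h).exists
    obtain ⟨n, hn⟩ := exists_nat_ge (u y)
    exact (hy n).not_ge hn
  exact .of_frequently_le hn

theorem essInf_le_add_setAverage_abs_sub {s : Set α} {m : ℝ} (hs : μ s ≠ 0)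
    (hs' : μ s ≠ ∞) (hu : IntegrableOn u s μ) (hm : ∀ᵐ y ∂μ.restrict s, m ≤ u y) (a : ℝ) :
    essInf u (μ.restrict s) ≤ a + ⨍ y in s, |u y - a| ∂μ := by
  have : IsFiniteMeasure (μ.restrict s) := isFiniteMeasure_restrict.2 hs'
  obtain ⟨y, hy, hya⟩ := exists_notMem_null_le_average (Measure.restrict_eq_zero.not.2 hs)
    (f := fun y => |u y - a|) (hu.sub (integrableOn_const hs')).abs
    (ae_iff.1 (ae_essInf_le (isBoundedUnder_of_eventually_ge hm)))
  calc essInf u (μ.restrict s) ≤ u y := not_not.1 hy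
    _ ≤ a + |u y - a| := by linarith [le_abs_self (u y - a)]
    _ ≤ a + ⨍ y in s, |u y - a| ∂μ := by gcongr

theorem measure_le_ofReal_mul_of_average_le [IsFiniteMeasure μ] {f : α → ℝ} {t τ : ℝ}
    (hf₀ : 0 ≤ᵐ[μ] f) (hf : Integrable f μ) (ht : 0 < t) (havg : ⨍ y, f y ∂μ ≤ τ * t) :
    μ {y | t ≤ f y} ≤ ENNReal.ofReal τ * μ univ := by
  have hreal : μ.real {y | t ≤ f y} ≤ τ * μ.real univ := by
    refine le_of_mul_le_mul_left ?_ ht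
    calc t * μ.real {y | t ≤ f y} ≤ ∫ y, f y ∂μ :=
          mul_meas_ge_le_integral_of_nonneg hf₀ hf t
      _ = μ.real univ * ⨍ y, f y ∂μ := (measure_smul_average μ f).symm
      _ ≤ μ.real univ * (τ * t) := by gcongr
      _ = t * (τ * μ.real univ) := by ring
  rw [← ofReal_measureReal, ← ofReal_measureReal, ← ENNReal.ofReal_mul' measureReal_nonneg]
  exact ENNReal.ofReal_le_ofReal hreal

theorem measure_sublevel_le_of_setAverage_abs_sub_le {s : Set α} {a b t τ : ℝ}
    (hs : MeasurableSet s) (hs' : μ s ≠ ∞) (hu : IntegrableOn u s μ) (ht : 0 < t)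
    (hba : b + t ≤ a) (havg : ⨍ y in s, |u y - a| ∂μ ≤ τ * t) :
    μ {y ∈ s | u y ≤ b} ≤ ENNReal.ofReal τ * μ s := by
  have : IsFiniteMeasure (μ.restrict s) := isFiniteMeasure_restrict.2 hs'
  have hsub : {y ∈ s | u y ≤ b} ⊆ {y | t ≤ |u y - a|} ∩ s := fun y ⟨hys, hyb⟩ =>
    ⟨(show t ≤ a - u y by linarith).trans ((le_abs_self _).trans_eq (abs_sub_comm _ _)), hys⟩
  calc μ {y ∈ s | u y ≤ b} ≤ μ.restrict s {y | t ≤ |u y - a|} :=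
        (measure_mono hsub).trans_eq (Measure.restrict_apply' hs).symm
    _ ≤ ENNReal.ofReal τ * μ.restrict s univ :=
        measure_le_ofReal_mul_of_average_le (ae_of_all _ fun _ => abs_nonneg _)
          (hu.sub (integrableOn_const hs')).abs ht havg
    _ = ENNReal.ofReal τ * μ s := by rw [Measure.restrict_apply_univ]

end MeasureSpace

section MetricMeasureSpace

variable {X : Type*} [PseudoMetricSpace X] [MeasurableSpace X] {μ : Measure X} {u : X → ℝ}
  {Ω : Set X} {x : X}

def HasDeGiorgiProperty (μ : Measure X) (Ω : Set X) (u : X → ℝ) (c : ℝ) : Prop :=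
  ∀ a : ℝ, 0 < a → a < 1 → ∀ M : ℝ, 0 < M → ∀ b : ℝ,
    ∃ τ : ℝ, 0 < τ ∧ τ < 1 ∧
      ∀ y ∈ Ω, ∀ ρ : ℝ, 0 < ρ → ρ ≤ 1 → ball y ρ ⊆ Ω →
        b ≤ essInf u (μ.restrict (ball y ρ)) →
        μ {x ∈ ball y ρ | u x ≤ b + M} ≤ ENNReal.ofReal τ * μ (ball y ρ) →
        ∀ᵐ x ∂μ.restrict (ball y (c * ρ)), b + a * M ≤ u x

theorem LocallyIntegrableOn.eventually_integrableOn_ball (hu : LocallyIntegrableOn u Ω μ)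
    (hΩ : IsOpen Ω) (hx : x ∈ Ω) :
    ∀ᶠ r in 𝓝 (0 : ℝ), ball x r ⊆ Ω ∧ IntegrableOn u (ball x r) μ := by
  obtain ⟨t, ht, hint⟩ := hu x hx
  rw [hΩ.nhdsWithin_eq hx] at ht
  obtain ⟨ε, hε, hball⟩ := Metric.mem_nhds_iff.1 (inter_mem ht (hΩ.mem_nhds hx))
  filter_upwards [Iio_mem_nhds hε] with r hr
  have hsub := (ball_subset_ball hr.le).trans hball
  exact ⟨hsub.trans inter_subset_right, hint.mono_set (hsub.trans inter_subset_left)⟩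

variable [ProperSpace X] [OpensMeasurableSpace X] [IsFiniteMeasureOnCompacts μ]
  [μ.IsOpenPosMeasure]

/-- Property (D) is applied with `a = 1/2`, `M = (u x - L) / 2` and level `b = L - M / 4`:
Chebyshev at the Lebesgue point gives `|{u ≤ b + M} ∩ B_ρ(x)| ≤ τ |B_ρ(x)|` since
`u x - (b + M) ≥ M`, and the conclusion `ess inf_{B_{cρ}(x)} u ≥ L + M / 4` contradicts the
definition of `L`. -/
theorem HasDeGiorgiProperty.le_liminf_essInf_ball {c m C : ℝ}
    (hD : HasDeGiorgiProperty μ Ω u c) (hc : 0 < c) (hx : x ∈ Ω)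
    (hLeb : Tendsto (fun r => ⨍ y in ball x r, |u y - u x| ∂μ) (𝓝[>] 0) (𝓝 0))
    (hint : ∀ᶠ r in 𝓝[>] 0, ball x r ⊆ Ω ∧ IntegrableOn u (ball x r) μ)
    (hbelow : ∀ᶠ r in 𝓝[>] 0, m ≤ essInf u (μ.restrict (ball x r)))
    (habove : ∀ᶠ r in 𝓝[>] 0, essInf u (μ.restrict (ball x r)) ≤ C) :
    u x ≤ liminf (fun r => essInf u (μ.restrict (ball x r))) (𝓝[>] 0) := by
  set L := liminf (fun r => essInf u (μ.restrict (ball x r))) (𝓝[>] 0)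
  by_contra! hL
  set M := (u x - L) / 2 with hM_def
  have hM : 0 < M := by linarith
  obtain ⟨τ, hτ, -, hτD⟩ := hD (1 / 2) one_half_pos one_half_lt_one M hM (L - M / 4)
  have hstep : ∀ᶠ ρ in 𝓝[>] 0, L + M / 4 ≤ essInf u (μ.restrict (ball x (c * ρ))) := by
    filter_upwards [hint, Ioc_mem_nhdsGT one_pos,
      eventually_lt_of_lt_liminf (show L - M / 4 < L by linarith)
        (isBoundedUnder_of_eventually_ge hbelow),
      hLeb.eventually (ge_mem_nhds (mul_pos hτ hM))]
      with ρ ⟨hρΩ, hρint⟩ ⟨hρ, hρ1⟩ hρL hρavg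
    have hsmall := measure_sublevel_le_of_setAverage_abs_sub_le (b := L - M / 4 + M)
      measurableSet_ball measure_ball_lt_top.ne hρint hM (by linarith) hρavg
    refine le_essInf_of_ae_le _ ?_ (isCoboundedUnder_ge_ae
      (Measure.restrict_eq_zero.not.2 (measure_ball_pos μ x (mul_pos hc hρ)).ne'))
    filter_upwards [hτD x hx ρ hρ hρ1 hρΩ hρL.le hsmall] with y hy
    linarith
  have hstep' : ∀ᶠ r in 𝓝[>] 0, L + M / 4 ≤ essInf u (μ.restrict (ball x r)) :=
    (eventually_nhdsGT_zero_mul_left (inv_pos.2 hc) hstep).mono fun r hr => by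
      rwa [mul_inv_cancel_left₀ hc.ne'] at hr
  have := le_liminf_of_le (isCoboundedUnder_ge_of_eventually_le _ habove) hstep'
  linarith

end MetricMeasureSpace

theorem lower_semicontinuity_from_property_D_general
    (n : ℕ) (Ω : Set (Rn n)) (hΩ : IsOpen Ω)
    (u : Rn n → ℝ)
    (hu_int : LocallyIntegrableOn u Ω)
    (hu_bdd : ∀ x ∈ Ω, ∃ ε > 0, ∃ m : ℝ, ∀ᵐ y ∂volume.restrict (ball x ε), m ≤ u y)
    (c : ℝ) (hc0 : 0 < c)
    (hD : ∀ a : ℝ, 0 < a → a < 1 → ∀ M : ℝ, 0 < M → ∀ μ : ℝ,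
      ∃ τ : ℝ, 0 < τ ∧ τ < 1 ∧
        ∀ y ∈ Ω, ∀ ρ : ℝ, 0 < ρ → ρ ≤ 1 → ball y ρ ⊆ Ω →
          μ ≤ essInf u (volume.restrict (ball y ρ)) →
          volume {x ∈ ball y ρ | u x ≤ μ + M} ≤ ENNReal.ofReal τ * volume (ball y ρ) →
          ∀ᵐ x ∂volume.restrict (ball y (c * ρ)), μ + a * M ≤ u x) :
    ∀ x ∈ Ω,
      Tendsto (fun r : ℝ => ⨍ y in ball x r, |u y - u x|) (nhdsWithin 0 (Ioi 0)) (nhds 0) →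
      Tendsto (fun r : ℝ => essInf u (volume.restrict (ball x r)))
        (nhdsWithin 0 (Ioi 0)) (nhds (u x)) := by
  intro x hx hLeb
  obtain ⟨ε, hε, m, hm⟩ := hu_bdd x hx
  have hsmall : ∀ᶠ r in 𝓝[>] (0 : ℝ), 0 < r ∧ (ball x r ⊆ Ω ∧ IntegrableOn u (ball x r)) ∧
      ∀ᵐ y ∂volume.restrict (ball x r), m ≤ u y := by
    filter_upwards [self_mem_nhdsWithin, Ioo_mem_nhdsGT hε, nhdsWithin_le_nhds
      (LocallyIntegrableOn.eventually_integrableOn_ball hu_int hΩ hx)] with r hr hrε hint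
    exact ⟨hr, hint, ae_restrict_of_ae_restrict_of_subset (ball_subset_ball hrε.2.le) hm⟩
  have hbelow : ∀ᶠ r in 𝓝[>] 0, m ≤ essInf u (volume.restrict (ball x r)) :=
    hsmall.mono fun r ⟨hr, _, hmr⟩ => le_essInf_of_ae_le _ hmr
      (isCoboundedUnder_ge_ae (Measure.restrict_eq_zero.not.2 (measure_ball_pos _ x hr).ne'))
  have habove : ∀ᶠ r in 𝓝[>] 0,
      essInf u (volume.restrict (ball x r)) ≤ u x + ⨍ y in ball x r, |u y - u x| :=
    hsmall.mono fun r ⟨hr, ⟨_, hint⟩, hmr⟩ => essInf_le_add_setAverage_abs_sub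
      (measure_ball_pos _ x hr).ne' measure_ball_lt_top.ne hint hmr (u x)
  have hupper : ∀ b > u x, ∀ᶠ r in 𝓝[>] 0, essInf u (volume.restrict (ball x r)) < b :=
    fun b hb => by
      filter_upwards [habove, hLeb.eventually (gt_mem_nhds (sub_pos.2 hb))] with r h₁ h₂
      linarith
  have hlower : u x ≤ liminf (fun r => essInf u (volume.restrict (ball x r))) (𝓝[>] 0) :=
    HasDeGiorgiProperty.le_liminf_essInf_ball (μ := volume) hD hc0 hx hLeb
      (hsmall.mono fun _ h => h.2.1) hbelow ((hupper _ (lt_add_one _)).mono fun _ h => h.le)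
  exact tendsto_order.2 ⟨fun b hb => eventually_lt_of_lt_liminf (hb.trans_le hlower)
    (isBoundedUnder_of_eventually_ge hbelow), hupper⟩

/-- **Lower semicontinuity from a measure-theoretic De Giorgi property**
(`Lemma lscthm` / `Theorem lscthm1`): at every Lebesgue point `x` of `u`, the value
`u x` agrees with the limit of the essential infima over small balls centered at `x`. -/
theorem lower_semicontinuity_from_property_D
    (n : ℕ) (hn : 1 ≤ n) (Ω : Set (Rn n)) (hΩ : IsOpen Ω)
    (u : Rn n → ℝ) (hu_meas : Measurable u)
    (hu_int : LocallyIntegrableOn u Ω)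
    (hu_bdd : ∀ x ∈ Ω, ∃ ε > 0, ∃ m : ℝ, ∀ᵐ y ∂volume.restrict (ball x ε), m ≤ u y)
    (c : ℝ) (hc0 : 0 < c) (hc1 : c < 1)
    (hD : ∀ a : ℝ, 0 < a → a < 1 → ∀ M : ℝ, 0 < M → ∀ μ : ℝ,
      ∃ τ : ℝ, 0 < τ ∧ τ < 1 ∧
        ∀ y ∈ Ω, ∀ ρ : ℝ, 0 < ρ → ρ ≤ 1 → ball y ρ ⊆ Ω →
          μ ≤ essInf u (volume.restrict (ball y ρ)) →
          volume {x ∈ ball y ρ | u x ≤ μ + M} ≤ ENNReal.ofReal τ * volume (ball y ρ) →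
          ∀ᵐ x ∂volume.restrict (ball y (c * ρ)), μ + a * M ≤ u x) :
    ∀ x ∈ Ω,
      Tendsto (fun r : ℝ => ⨍ y in ball x r, |u y - u x|) (nhdsWithin 0 (Ioi 0)) (nhds 0) →
      Tendsto (fun r : ℝ => essInf u (volume.restrict (ball x r)))
        (nhdsWithin 0 (Ioi 0)) (nhds (u x)) :=
  lower_semicontinuity_from_property_D_general n Ω hΩ u hu_int hu_bdd c hc0 hD
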